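/- Completeness of NRA_{m,n}: for any formula ψ, if ψ is valid on all finite Sub(ψ)-(m,n)-accessible N-frames, then NRA_{m,n} ⊢ ψ. -/

import Mathlib

inductive Formula : Type
  | bot : Formula
  | var : ℕ → Formula
  | neg : Formula → Formula
  | or : Formula → Formula → Formula
  | box : Formula → Formula
  deriving DecidableEq

namespace Formula

def imp (φ ψ : Formula) : Formula := .or (.neg φ) ψ

def and (φ ψ : Formula) : Formula := .neg (.or (.neg φ) (.neg ψ))

/-- □^n φ -/
def boxn : ℕ → Formula → Formula
  | 0, φ => φ
  | k+1, φ => .box (boxn k φ)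

/-- the set of subformulas -/
def sub : Formula → Finset Formula
  | .bot => {.bot}
  | .var p => {.var p}
  | .neg φ => insert (.neg φ) φ.sub
  | .or φ ψ => insert (.or φ ψ) (φ.sub ∪ ψ.sub)
  | .box φ => insert (.box φ) φ.sub

/-- ∼ρ -/
def negg : Formula → Formula
  | .neg φ => φ
  | φ => .neg φ

end Formula

def NSub (ψ : Formula) : Finset Formula := ψ.sub ∪ ψ.sub.image Formula.negg

/-- boolean evaluation treating boxed formulas and variables as atoms -/
def evalP (v : Formula → Bool) : Formula → Bool
  | .bot => false
  | .var p => v (.var p)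
  | .neg φ => !(evalP v φ)
  | .or φ ψ => evalP v φ || evalP v ψ
  | .box φ => v (.box φ)

/-- propositional tautologies in the modal language -/
def Tautology (φ : Formula) : Prop := ∀ v, evalP v φ = true

/-- Provability in NA_{m,n} (ros = false) and NRA_{m,n} (ros = true):
    propositional tautologies, the scheme □^n φ → □^m φ, modus ponens,
    necessitation, and (if ros) the rule Ros^□ : ¬□φ / ¬□□φ. -/
inductive Prov (m n : ℕ) (ros : Bool) : Formula → Prop
  | taut {φ} : Tautology φ → Prov m n ros φ
  | axA (φ) : Prov m n ros ((Formula.boxn n φ).imp (Formula.boxn m φ))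
  | mp {φ ψ} : Prov m n ros (φ.imp ψ) → Prov m n ros φ → Prov m n ros ψ
  | nec {φ} : Prov m n ros φ → Prov m n ros (.box φ)
  | ros {φ} : ros = true → Prov m n ros (.neg (.box φ)) →
      Prov m n ros (.neg (.box (.box φ)))

/-- An N-frame on world set W: a binary relation R_φ for each formula φ. -/
abbrev NFrame (W : Type) := Formula → W → W → Prop

structure NModel (W : Type) where
  Rel : NFrame W
  V : W → ℕ → Prop

/-- satisfaction in an N-model -/
def Sat {W : Type} (M : NModel W) : W → Formula → Prop
  | _, .bot => False
  | w, .var p => M.V w p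
  | w, .neg φ => ¬ Sat M w φ
  | w, .or φ ψ => Sat M w φ ∨ Sat M w ψ
  | w, .box φ => ∀ w', M.Rel φ w w' → Sat M w' φ

/-- x R_φ^k y : there is a φ-path of length k from x to y -/
def FPath {W : Type} (R : NFrame W) (φ : Formula) : ℕ → W → W → Prop
  | 0, x, y => x = y
  | k+1, x, y => ∃ w, R (Formula.boxn k φ) x w ∧ FPath R φ k w y

/-- (m,n)-accessibility for φ -/
def AccFor {W : Type} (R : NFrame W) (m n : ℕ) (φ : Formula) : Prop :=
  ∀ x y, FPath R φ m x y → FPath R φ n x y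

/-- Γ-(m,n)-accessibility -/
def SubAcc {W : Type} (R : NFrame W) (m n : ℕ) (Γ : Finset Formula) : Prop :=
  ∀ φ, Formula.boxn m φ ∈ Γ → AccFor R m n φ

/-- (m,n)-accessibility -/
def Accessible {W : Type} (R : NFrame W) (m n : ℕ) : Prop :=
  ∀ φ, AccFor R m n φ

def ValidM {W : Type} (M : NModel W) (ψ : Formula) : Prop := ∀ w, Sat M w ψ

def ValidF {W : Type} (R : NFrame W) (ψ : Formula) : Prop :=
  ∀ V : W → ℕ → Prop, ValidM ⟨R, V⟩ ψ


/-!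
If `ψ` is unprovable, it is refuted in a finite model whose worlds carry `ψ`-maximal consistent
sets, truth agreeing with membership for the subformulas labelling each world.

For `n ≥ 1` the canonical model is `Sub(ψ)`-`(m,n)`-accessible: the `φ`-path of length `n` from
`X` to `Y` runs through worlds containing `□ʲ φ` up to a threshold and omitting it above; the
axiom, necessitation and `Ros^□` (which pushes `⊢ ¬□ʲ φ` up to `⊢ ¬□ᵏ φ`) make such worlds exist.

For `n = 0` the canonical frame is not accessible.  Instead every missing `□^(ℓ+1) B` spawns an
`m`-cycle of fresh worlds refuting `B`, with edges labelled so that the path `□ˡ B, …, B` from the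
spawning world ends where `B` fails; `φ → □ᵐ φ` shows that no such edge leaves a world along a box
it contains, and `φ`-paths of length `m` go once around a cycle, back to their start.
-/

namespace Formula

def size : Formula → ℕ
  | .bot => 1
  | .var _ => 1
  | .neg φ => φ.size + 1
  | .or φ χ => φ.size + χ.size + 1
  | .box φ => φ.size + 1

/-- Every formula is `boxn χ.degree χ.core` with `χ.core` not a box (`boxn_degree_core`). -/
def core : Formula → Formula
  | .box φ => core φ
  | φ => φ

def degree : Formula → ℕ
  | .box φ => degree φ + 1
  | _ => 0

@[simp] lemma boxn_zero (φ : Formula) : boxn 0 φ = φ := rfl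

@[simp] lemma boxn_succ (k : ℕ) (φ : Formula) : boxn (k + 1) φ = .box (boxn k φ) := rfl

lemma boxn_add (a b : ℕ) (φ : Formula) : boxn (a + b) φ = boxn a (boxn b φ) := by
  induction a with
  | zero => simp
  | succ a ih => rw [Nat.add_right_comm, boxn_succ, ih, boxn_succ]

@[simp] lemma core_boxn (k : ℕ) (φ : Formula) : (boxn k φ).core = φ.core := by
  induction k <;> simp [core, *]

@[simp] lemma degree_boxn (k : ℕ) (φ : Formula) : (boxn k φ).degree = k + φ.degree := by
  induction k <;> simp [degree, *]; omega

@[simp] lemma size_boxn (k : ℕ) (φ : Formula) : (boxn k φ).size = k + φ.size := by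
  induction k <;> simp [size, *]; omega

lemma boxn_degree_core (χ : Formula) : boxn χ.degree χ.core = χ := by
  induction χ <;> simp [degree, core, *]

@[simp] lemma core_core (χ : Formula) : χ.core.core = χ.core := by
  induction χ <;> simp [core, *]

@[simp] lemma degree_core (χ : Formula) : χ.core.degree = 0 := by
  induction χ <;> simp [core, degree, *]

lemma size_eq_degree_add_size_core (χ : Formula) : χ.size = χ.degree + χ.core.size := by
  conv_lhs => rw [← boxn_degree_core χ]
  rw [size_boxn]

lemma box_eq_boxn_core (χ : Formula) : .box χ = boxn (χ.degree + 1) χ.core := by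
  rw [boxn_succ, boxn_degree_core]

lemma mem_sub_self (φ : Formula) : φ ∈ φ.sub := by
  cases φ <;> simp [sub]

lemma sub_subset_sub {α β : Formula} (h : β ∈ α.sub) : β.sub ⊆ α.sub := by
  induction α with
  | bot | var => simp_all [sub]
  | neg φ ih =>
    rcases Finset.mem_insert.mp h with rfl | h
    · rfl
    · exact (ih h).trans (Finset.subset_insert _ _)
  | or φ χ ihφ ihχ =>
    rcases Finset.mem_insert.mp h with rfl | h
    · rfl
    rcases Finset.mem_union.mp h with h | h
    · exact (ihφ h).trans (Finset.subset_union_left.trans (Finset.subset_insert _ _))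
    · exact (ihχ h).trans (Finset.subset_union_right.trans (Finset.subset_insert _ _))
  | box φ ih =>
    rcases Finset.mem_insert.mp h with rfl | h
    · rfl
    · exact (ih h).trans (Finset.subset_insert _ _)

lemma size_le_of_mem_sub {α β : Formula} (h : β ∈ α.sub) : β.size ≤ α.size := by
  induction α with
  | bot | var => simp_all [sub]
  | neg φ ih =>
    rcases Finset.mem_insert.mp h with rfl | h
    · rfl
    · exact (ih h).trans (by simp [size])
  | or φ χ ihφ ihχ =>
    rcases Finset.mem_insert.mp h with rfl | h
    · rfl
    rcases Finset.mem_union.mp h with h | h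
    · exact (ihφ h).trans (by simp [size]; omega)
    · exact (ihχ h).trans (by simp [size]; omega)
  | box φ ih =>
    rcases Finset.mem_insert.mp h with rfl | h
    · rfl
    · exact (ih h).trans (by simp [size])

lemma mem_sub_boxn (k : ℕ) (φ : Formula) : φ ∈ (boxn k φ).sub := by
  induction k <;> simp [sub, mem_sub_self, *]

lemma boxn_mem_sub_of_le {j k : ℕ} {φ α : Formula} (hjk : j ≤ k) (h : boxn k φ ∈ α.sub) :
    boxn j φ ∈ α.sub := by
  obtain ⟨d, rfl⟩ := Nat.exists_eq_add_of_le' hjk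
  rw [boxn_add] at h
  exact sub_subset_sub h (mem_sub_boxn d _)

@[simp] lemma evalP_negg (v : Formula → Bool) (φ : Formula) : evalP v φ.negg = !evalP v φ := by
  cases φ <;> simp [negg, evalP]

end Formula

open Formula

lemma sub_subset_NSub (ψ : Formula) : ψ.sub ⊆ NSub ψ := Finset.subset_union_left

lemma negg_mem_NSub {ψ α : Formula} (h : α ∈ ψ.sub) : α.negg ∈ NSub ψ :=
  Finset.mem_union_right _ (Finset.mem_image_of_mem _ h)

lemma box_mem_sub_of_box_mem_NSub {ψ β : Formula} (h : .box β ∈ NSub ψ) : .box β ∈ ψ.sub := by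
  rcases Finset.mem_union.mp h with h | h
  · exact h
  obtain ⟨γ, hγ, he⟩ := Finset.mem_image.mp h
  cases γ <;> simp only [negg, reduceCtorEq] at he
  subst he
  exact sub_subset_sub hγ (by simp [sub])

def conj : List Formula → Formula
  | [] => .neg .bot
  | a :: l => a.and (conj l)

@[simp] lemma evalP_conj (v : Formula → Bool) (L : List Formula) :
    evalP v (conj L) = L.all (evalP v) := by
  induction L <;> simp [conj, Formula.and, evalP, *]

namespace Prov

variable {m n : ℕ} {ros : Bool}

theorem of_tautology_imp {a φ : Formula} (ht : Tautology (a.imp φ)) (ha : Prov m n ros a) :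
    Prov m n ros φ :=
  mp (taut ht) ha

theorem of_tautology_imp₂ {a b φ : Formula} (ht : Tautology (a.imp (b.imp φ)))
    (ha : Prov m n ros a) (hb : Prov m n ros b) : Prov m n ros φ :=
  mp (mp (taut ht) ha) hb

theorem boxn_of_le {j k : ℕ} {φ : Formula} (hjk : j ≤ k) (h : Prov m n ros (boxn j φ)) :
    Prov m n ros (boxn k φ) := by
  induction k, hjk using Nat.le_induction with
  | base => exact h
  | succ k _ ih => exact nec ih

theorem neg_boxn_of_le {j k : ℕ} {φ : Formula} (hj : 1 ≤ j) (hjk : j ≤ k)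
    (h : Prov m n true (boxn j φ).neg) : Prov m n true (boxn k φ).neg := by
  induction k, hjk using Nat.le_induction with
  | base => exact h
  | succ k hjk ih =>
    obtain ⟨k, rfl⟩ : ∃ k', k = k' + 1 := ⟨k - 1, by omega⟩
    exact ros rfl ih

theorem imp_boxn_mul (t : ℕ) (φ : Formula) : Prov m 0 ros (φ.imp (boxn (t * m) φ)) := by
  induction t with
  | zero => exact taut fun v => by cases evalP v φ <;> simp [Formula.imp, evalP]
  | succ t ih =>
    rw [Nat.succ_mul, Nat.add_comm, boxn_add]
    refine of_tautology_imp₂ (fun v => ?_) ih (axA (boxn (t * m) φ))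
    simp only [boxn_zero, Formula.imp, evalP]
    cases evalP v φ <;> cases evalP v (boxn (t * m) φ) <;> simp

theorem boxn_imp_boxn_of_modEq {j k : ℕ} {φ : Formula} (hjk : j ≤ k) (hmod : j ≡ k [MOD m]) :
    Prov m 0 ros ((boxn j φ).imp (boxn k φ)) := by
  obtain ⟨t, ht⟩ := (Nat.modEq_iff_dvd' hjk).mp hmod
  rw [show k = t * m + j by rw [Nat.mul_comm]; omega, boxn_add]
  exact imp_boxn_mul t _

end Prov

def Consistent (m n : ℕ) (X : Finset Formula) : Prop := ¬ Prov m n true (conj X.toList).neg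

structure IsMCS (m n : ℕ) (ψ : Formula) (X : Finset Formula) : Prop where
  subset_NSub : X ⊆ NSub ψ
  consistent : Consistent m n X
  mem_or_negg_mem : ∀ α ∈ ψ.sub, α ∈ X ∨ α.negg ∈ X

section Consistency

variable {m n : ℕ} {ψ : Formula} {X : Finset Formula}

lemma Consistent.mono {Y : Finset Formula} (hY : Consistent m n Y) (hXY : X ⊆ Y) :
    Consistent m n X := by
  refine fun hX => hY (Prov.of_tautology_imp (fun v => ?_) hX)
  simp [Formula.imp, evalP, List.all_eq_true]
  grind

lemma consistent_singleton {α : Formula} (h : ¬ Prov m n true α.neg) : Consistent m n {α} := by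
  simp only [Consistent, Finset.toList_singleton]
  refine fun hc => h (Prov.of_tautology_imp (fun v => ?_) hc)
  cases evalP v α <;> simp [conj, Formula.imp, Formula.and, evalP]

lemma Consistent.insert_or_insert_negg (hX : Consistent m n X) (α : Formula) :
    Consistent m n (insert α X) ∨ Consistent m n (insert α.negg X) := by
  by_contra! h
  simp only [Consistent, not_not] at h
  refine hX (Prov.of_tautology_imp₂ (fun v => ?_) h.1 h.2)
  cases hα : evalP v α <;>
    simp [Formula.imp, evalP, List.all_eq_true, Finset.mem_toList, hα] <;> grind

theorem exists_isMCS_mem {β : Formula} (hβ : β ∈ NSub ψ) (h : ¬ Prov m n true β.neg) :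
    ∃ X, IsMCS m n ψ X ∧ β ∈ X := by
  classical
  let S := (NSub ψ).powerset.filter fun Y => β ∈ Y ∧ Consistent m n Y
  obtain ⟨X, hβX, hmax⟩ := S.exists_le_maximal (a := {β})
    (by simp [S, hβ, consistent_singleton h])
  obtain ⟨hXψ, -, hXc⟩ : X ⊆ NSub ψ ∧ β ∈ X ∧ Consistent m n X := by
    simpa [S] using hmax.prop
  have grow : ∀ γ ∈ NSub ψ, Consistent m n (insert γ X) → γ ∈ X := fun γ hγ hc =>
    hmax.2 (by simp [S, Finset.insert_subset_iff, *, Finset.singleton_subset_iff.mp hβX])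
      (Finset.subset_insert _ _) (Finset.mem_insert_self _ _)
  refine ⟨X, ⟨hXψ, hXc, fun α hα => ?_⟩, Finset.singleton_subset_iff.mp hβX⟩
  exact (hXc.insert_or_insert_negg α).imp (grow α (sub_subset_NSub ψ hα))
    (grow _ (negg_mem_NSub hα))

theorem exists_isMCS_negg_mem {α : Formula} (hα : α ∈ ψ.sub) (h : ¬ Prov m n true α) :
    ∃ X, IsMCS m n ψ X ∧ α.negg ∈ X := by
  refine exists_isMCS_mem (negg_mem_NSub hα) fun hn => h (Prov.of_tautology_imp (fun v => ?_) hn)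
  cases evalP v α <;> simp [Formula.imp, evalP]

end Consistency

namespace IsMCS

variable {m n : ℕ} {ψ : Formula} {X : Finset Formula}

theorem false_of_entails (hX : IsMCS m n ψ X) {S : Finset Formula} (hS : S ⊆ X) {θ : Formula}
    (hθ : Prov m n true θ) (h : ∀ v, evalP v θ = true → ∃ x ∈ S, evalP v x = false) : False := by
  refine hX.consistent.mono hS (Prov.of_tautology_imp (fun v => ?_) hθ)
  cases hv : evalP v θ
  · simp [Formula.imp, evalP, hv]
  · obtain ⟨x, hx, hxv⟩ := h v hv
    simpa [Formula.imp, evalP, List.all_eq_true] using Or.inr ⟨x, hx, hxv⟩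

theorem false_of_unsat (hX : IsMCS m n ψ X) {S : Finset Formula} (hS : S ⊆ X)
    (h : ∀ v, ∃ x ∈ S, evalP v x = false) : False :=
  hX.false_of_entails hS (Prov.taut (φ := .neg .bot) fun _ => rfl) fun v _ => h v

theorem mem_of_imp (hX : IsMCS m n ψ X) {α β : Formula} (hp : Prov m n true (α.imp β))
    (hα : α ∈ X) (hβ : β ∈ ψ.sub) : β ∈ X :=
  (hX.mem_or_negg_mem β hβ).resolve_right fun hn =>
    hX.false_of_entails (S := {α, β.negg}) (by simp [Finset.insert_subset_iff, *]) hp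
      fun v => by simp [Formula.imp, evalP]

theorem mem_of_prov (hX : IsMCS m n ψ X) {α : Formula} (hp : Prov m n true α)
    (hα : α ∈ ψ.sub) : α ∈ X :=
  (hX.mem_or_negg_mem α hα).resolve_right fun hn =>
    hX.false_of_entails (S := {α.negg}) (by simpa) hp fun v => by simp_all

theorem not_mem_of_prov_neg (hX : IsMCS m n ψ X) {α : Formula} (hp : Prov m n true α.neg) :
    α ∉ X := fun hα =>
  hX.false_of_entails (S := {α}) (by simpa) hp fun v => by simp [evalP]

theorem negg_not_mem (hX : IsMCS m n ψ X) {α : Formula} (hα : α ∈ X) : α.negg ∉ X := fun hn =>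
  hX.false_of_unsat (S := {α, α.negg}) (by simp [Finset.insert_subset_iff, *]) fun v => by simp

theorem bot_not_mem (hX : IsMCS m n ψ X) : Formula.bot ∉ X := fun h =>
  hX.false_of_unsat (S := {.bot}) (by simpa) fun v => by simp [evalP]

theorem neg_mem_iff (hX : IsMCS m n ψ X) {α : Formula} (hs : α.neg ∈ ψ.sub) :
    α.neg ∈ X ↔ α ∉ X := by
  refine ⟨fun hn hα => hX.false_of_unsat (S := {α, α.neg})
    (by simp [Finset.insert_subset_iff, *]) fun v => by simp [evalP], fun hα => ?_⟩
  simpa [negg, hα] using hX.mem_or_negg_mem _ hs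

theorem or_mem_iff (hX : IsMCS m n ψ X) {α β : Formula} (hs : α.or β ∈ ψ.sub) :
    α.or β ∈ X ↔ α ∈ X ∨ β ∈ X := by
  have hα : α ∈ ψ.sub := sub_subset_sub hs (by simp [sub, mem_sub_self])
  have hβ : β ∈ ψ.sub := sub_subset_sub hs (by simp [sub, mem_sub_self])
  constructor
  · refine fun h => by_contra fun hn => ?_
    rw [not_or] at hn
    have hα' := (hX.mem_or_negg_mem α hα).resolve_left hn.1
    have hβ' := (hX.mem_or_negg_mem β hβ).resolve_left hn.2
    exact hX.false_of_unsat (S := {α.or β, α.negg, β.negg})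
      (by simp [Finset.insert_subset_iff, *]) fun v => by simp [evalP]; grind
  · rintro (h | h) <;>
      exact hX.mem_of_imp (Prov.taut fun v => by simp [Formula.imp, evalP]; grind) h hs

theorem not_prov_neg_of_prov (hX : IsMCS m n ψ X) {α : Formula} (hp : Prov m n true α) :
    ¬ Prov m n true α.neg := fun hn =>
  hX.false_of_entails (S := ∅) (by simp) (Prov.of_tautology_imp₂ (φ := .bot)
    (fun v => by simp [Formula.imp, evalP]) hp hn) fun v => by simp [evalP]

theorem boxn_mem_sub (hX : IsMCS m n ψ X) {j : ℕ} {φ : Formula} (hj : 0 < j)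
    (h : boxn j φ ∈ X) : boxn j φ ∈ ψ.sub := by
  obtain ⟨j, rfl⟩ : ∃ j', j = j' + 1 := ⟨j - 1, by omega⟩
  exact box_mem_sub_of_box_mem_NSub (hX.subset_NSub h)

end IsMCS

def NModel.ofMCS {W : Type} (R : NFrame W) (mcs : W → Finset Formula) : NModel W :=
  ⟨R, fun w p => .var p ∈ mcs w⟩

/-- Truth need only agree with membership in `mcs w` for the formulas in `label w`: this lets fresh
worlds refuting a subformula `B` be correct on `B.sub` alone. -/
structure LabelledModel (m n : ℕ) (ψ : Formula) (W : Type) where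
  rel : NFrame W
  mcs : W → Finset Formula
  label : W → Finset Formula
  isMCS : ∀ w, IsMCS m n ψ (mcs w)
  label_subset : ∀ w, label w ⊆ ψ.sub
  sub_subset_label : ∀ w, ∀ α ∈ label w, α.sub ⊆ label w
  box_mem : ∀ α w w', .box α ∈ label w → .box α ∈ mcs w → rel α w w' →
    α ∈ label w' ∧ α ∈ mcs w'
  exists_refuting : ∀ α w, .box α ∈ label w → .box α ∉ mcs w →
    (∀ χ w', χ.size ≤ α.size → χ ∈ label w' → (Sat (NModel.ofMCS rel mcs) w' χ ↔ χ ∈ mcs w')) →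
    ∃ w', rel α w w' ∧ ¬ Sat (NModel.ofMCS rel mcs) w' α

namespace LabelledModel

variable {m n : ℕ} {ψ : Formula} {W : Type} (G : LabelledModel m n ψ W)

theorem sat_iff_mem {χ : Formula} {w : W} (hχ : χ ∈ G.label w) :
    Sat (NModel.ofMCS G.rel G.mcs) w χ ↔ χ ∈ G.mcs w := by
  induction hs : χ.size using Nat.strong_induction_on generalizing χ w with
  | _ s ih =>
  have ih' : ∀ β, β.size < s → ∀ w, β ∈ G.label w →
      (Sat (NModel.ofMCS G.rel G.mcs) w β ↔ β ∈ G.mcs w) :=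
    fun β hβ w hl => ih _ hβ hl rfl
  have child : ∀ β ∈ χ.sub, β ∈ G.label w := fun β hβ => G.sub_subset_label w χ hχ hβ
  subst hs
  have hsub := G.label_subset w hχ
  cases χ with
  | bot => exact ⟨False.elim, fun h => (G.isMCS w).bot_not_mem h⟩
  | var p => exact Iff.rfl
  | neg α =>
    simp only [Sat]
    rw [ih' α (by simp [size]) w (child α (by simp [sub, mem_sub_self])),
      (G.isMCS w).neg_mem_iff hsub]
  | or α β =>
    simp only [Sat]
    rw [ih' α (by simp [size]) w (child α (by simp [sub, mem_sub_self])),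
      ih' β (by simp [size]) w (child β (by simp [sub, mem_sub_self])),
      (G.isMCS w).or_mem_iff hsub]
  | box α =>
    have hα : α.size < (Formula.box α).size := by simp [size]
    refine ⟨fun hsat => by_contra fun hn => ?_, fun hm w' hR => ?_⟩
    · obtain ⟨w', hR, hns⟩ := G.exists_refuting α w hχ hn
        fun β w' hle hl => ih' β (hle.trans_lt hα) w' hl
      exact hns (hsat w' hR)
    · obtain ⟨hl, hm'⟩ := G.box_mem α w w' hχ hm hR
      exact (ih' α hα w' hl).2 hm'

theorem not_validF {w : W} (hψ : ψ ∈ G.label w) (hneg : ψ.negg ∈ G.mcs w) : ¬ ValidF G.rel ψ :=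
  fun hv => (G.isMCS w).negg_not_mem ((G.sat_iff_mem hψ).1 (hv _ w)) hneg

end LabelledModel

theorem FPath.of_stages {W : Type} {R : NFrame W} {φ : Formula} (S : ℕ → W → Prop) {y : W}
    (h0 : ∀ w, S 0 w → w = y) {k : ℕ} (hne : ∀ j < k, ∃ w, S j w)
    (hstep : ∀ j < k, ∀ a b, S (j + 1) a → S j b → R (boxn j φ) a b) :
    ∀ x, S k x → FPath R φ k x y := by
  induction k with
  | zero => exact h0
  | succ k ih =>
    intro x hx
    obtain ⟨w, hw⟩ := hne k k.lt_succ_self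
    exact ⟨w, hstep k k.lt_succ_self x w hx hw,
      ih (fun j hj => hne j (by omega)) (fun j hj => hstep j (by omega)) w hw⟩

theorem not_sat_boxn_of_fpath {W : Type} {M : NModel W} {φ : Formula} {k : ℕ} {x y : W}
    (hp : FPath M.Rel φ k x y) (hy : ¬ Sat M y φ) : ¬ Sat M x (boxn k φ) := by
  induction k generalizing x with
  | zero => exact hp ▸ hy
  | succ k ih =>
    obtain ⟨w, hR, hw⟩ := hp
    exact fun hx => ih hw (hx w hR)

section Canonical

variable (m n : ℕ) (ψ : Formula)

def CanonicalWorld : Type := {X : Finset Formula // IsMCS m n ψ X}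

instance : Finite (CanonicalWorld m n ψ) :=
  Set.Finite.to_subtype <| (NSub ψ).powerset.finite_toSet.subset fun _ hX =>
    Finset.mem_coe.mpr (Finset.mem_powerset.mpr (IsMCS.subset_NSub hX))

def canonicalRel : NFrame (CanonicalWorld m n ψ) := fun χ X Y => .box χ ∈ X.1 → χ ∈ Y.1

def canonicalModel : LabelledModel m n ψ (CanonicalWorld m n ψ) where
  rel := canonicalRel m n ψ
  mcs X := X.1
  label _ := ψ.sub
  isMCS X := X.2
  label_subset _ := subset_rfl
  sub_subset_label _ _ h := sub_subset_sub h
  box_mem α _ _ hl hm hR := ⟨sub_subset_sub hl (by simp [sub, mem_sub_self]), hR hm⟩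
  exists_refuting α X hl hn ih := by
    have hα : α ∈ ψ.sub := sub_subset_sub hl (by simp [sub, mem_sub_self])
    obtain ⟨Y, hY, hneg⟩ := exists_isMCS_negg_mem hα fun hp => hn (X.2.mem_of_prov (.nec hp) hl)
    exact ⟨⟨Y, hY⟩, fun h => absurd h hn,
      fun hs => hY.negg_not_mem ((ih α ⟨Y, hY⟩ le_rfl hα).1 hs) hneg⟩

variable {m n ψ}

theorem canonicalRel_fpath_mem {φ : Formula} {k : ℕ} {X Y : CanonicalWorld m n ψ}
    (hp : FPath (canonicalRel m n ψ) φ k X Y) (hX : boxn k φ ∈ X.1) : φ ∈ Y.1 := by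
  induction k generalizing X with
  | zero => exact hp ▸ hX
  | succ k ih =>
    obtain ⟨Z, hR, hZ⟩ := hp
    exact ih hZ (hR hX)

/-- The threshold for the path built in `canonicalRel_subAcc`: its `j`-th world contains `□ʲ φ`
exactly when `□ʲ φ` is forced. -/
def Forced (X : CanonicalWorld m n ψ) (φ : Formula) (j : ℕ) : Prop :=
  boxn n φ ∈ X.1 ∨ ∃ i, j ≤ i ∧ i < n ∧ boxn i φ ∈ ψ.sub ∧ Prov m n true (boxn i φ)

theorem Forced.of_succ {X : CanonicalWorld m n ψ} {φ : Formula} {j : ℕ}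
    (h : Forced X φ (j + 1)) : Forced X φ j :=
  h.imp_right fun ⟨i, hi, h⟩ => ⟨i, by omega, h⟩

theorem Forced.boxn_mem {X : CanonicalWorld m n ψ} {φ : Formula} (hφ : boxn m φ ∈ ψ.sub)
    (h : Forced X φ 0) : boxn m φ ∈ X.1 := by
  rcases h with hX | ⟨i, -, hin, -, hp⟩
  · exact X.2.mem_of_imp (Prov.axA φ) hX hφ
  · exact X.2.mem_of_prov (.mp (Prov.axA φ) (Prov.boxn_of_le hin.le hp)) hφ

theorem exists_boxn_mem_iff_forced (hn : 0 < n) (X : CanonicalWorld m n ψ) (φ : Formula)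
    {j : ℕ} (hj : 0 < j) (hjn : j < n) :
    ∃ Z : CanonicalWorld m n ψ, (boxn j φ ∈ Z.1 ↔ Forced X φ j) := by
  by_cases hf : Forced X φ j
  · obtain ⟨i, hji, hsub, hcon⟩ :
        ∃ i, j ≤ i ∧ boxn i φ ∈ ψ.sub ∧ ¬ Prov m n true (boxn i φ).neg := by
      rcases hf with hX | ⟨i, hji, -, hs, hp⟩
      · exact ⟨n, hjn.le, X.2.boxn_mem_sub hn hX, fun h => X.2.not_mem_of_prov_neg h hX⟩
      · exact ⟨i, hji, hs, X.2.not_prov_neg_of_prov hp⟩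
    obtain ⟨Z, hZ, hmem⟩ := exists_isMCS_mem (sub_subset_NSub ψ (boxn_mem_sub_of_le hji hsub))
      fun h => hcon (Prov.neg_boxn_of_le hj hji h)
    exact ⟨⟨Z, hZ⟩, iff_of_true hmem hf⟩
  · by_cases hs : boxn j φ ∈ ψ.sub
    · obtain ⟨Z, hZ, hneg⟩ := exists_isMCS_negg_mem hs
        fun hp => hf (Or.inr ⟨j, le_rfl, hjn, hs, hp⟩)
      exact ⟨⟨Z, hZ⟩, iff_of_false (fun h => hZ.negg_not_mem h hneg) hf⟩
    · exact ⟨X, iff_of_false (fun h => hs (X.2.boxn_mem_sub hj h)) hf⟩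

theorem canonicalRel_subAcc (hn : 0 < n) : SubAcc (canonicalRel m n ψ) m n ψ.sub := by
  intro φ hφ X Y hpath
  let S : ℕ → CanonicalWorld m n ψ → Prop := fun j Z => (j = 0 → Z = Y) ∧
    (0 < j → boxn j φ ∈ Z.1 → Forced X φ j) ∧ (j < n → Forced X φ j → boxn j φ ∈ Z.1)
  refine FPath.of_stages S (fun _ h => h.1 rfl) (fun j hj => ?_) (fun j hj a b ha hb hR => ?_) X
    ⟨fun h => absurd h hn.ne', fun _ h => Or.inl h, fun h => absurd h (lt_irrefl n)⟩
  · rcases Nat.eq_zero_or_pos j with rfl | hj0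
    · exact ⟨Y, fun _ => rfl, fun h => absurd h (lt_irrefl 0),
        fun _ hf => canonicalRel_fpath_mem hpath (hf.boxn_mem hφ)⟩
    · obtain ⟨Z, hZ⟩ := exists_boxn_mem_iff_forced hn X φ hj0 hj
      exact ⟨Z, fun h => absurd h hj0.ne', fun _ => hZ.1, fun _ => hZ.2⟩
  · exact hb.2.2 hj (ha.2.1 j.succ_pos hR).of_succ

end Canonical

/-- Worlds of the model refuting `ψ` when `n = 0`.  The trace `(B, i) :: σ` is position `i` on the
`m`-cycle through `σ` spawned to refute the boxed powers of `B` missing at `σ`; position `0` of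
that cycle is `σ` itself, and the empty trace is the root. -/
abbrev Trace : Type := List (Formula × ℕ)

namespace Trace

def lab (ψ : Formula) : Trace → Formula
  | [] => ψ
  | e :: _ => e.1

open Classical in
noncomputable def mcs (m : ℕ) (ψ : Formula) (σ : Trace) : Finset Formula :=
  if h : ∃ X, IsMCS m 0 ψ X ∧ (lab ψ σ).negg ∈ X then h.choose else ∅

def Missing (m : ℕ) (ψ : Formula) (σ : Trace) (B : Formula) (ℓ : ℕ) : Prop :=
  boxn (ℓ + 1) B ∈ (lab ψ σ).sub ∧ boxn (ℓ + 1) B ∉ mcs m ψ σ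

def Valid (m : ℕ) (ψ : Formula) : Trace → Prop
  | [] => True
  | (B, i) :: σ => Valid m ψ σ ∧ 0 < i ∧ i < m ∧ B ∈ ψ.sub ∧ ¬ Prov m 0 true B ∧
      ∃ ℓ, Missing m ψ σ B ℓ

def cyclePos (m : ℕ) (σ : Trace) (B : Formula) (p : ℕ) : Trace :=
  if p % m = 0 then σ else (B, p % m) :: σ

variable {m : ℕ} {ψ : Formula} {σ : Trace}

theorem lab_mem_sub (hσ : Valid m ψ σ) : lab ψ σ ∈ ψ.sub := by
  match σ, hσ with
  | [], _ => exact mem_sub_self ψ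
  | _ :: _, hσ => exact hσ.2.2.2.1

theorem isMCS_mcs (hψ : ¬ Prov m 0 true ψ) (hσ : Valid m ψ σ) :
    IsMCS m 0 ψ (mcs m ψ σ) ∧ (lab ψ σ).negg ∈ mcs m ψ σ := by
  have h : ∃ X, IsMCS m 0 ψ X ∧ (lab ψ σ).negg ∈ X := by
    match σ, hσ with
    | [], _ => exact exists_isMCS_negg_mem (mem_sub_self ψ) hψ
    | _ :: _, hσ => exact exists_isMCS_negg_mem hσ.2.2.2.1 hσ.2.2.2.2.1
  rw [mcs, dif_pos h]
  exact h.choose_spec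

theorem Missing.size_lt {B : Formula} {ℓ : ℕ} (h : Missing m ψ σ B ℓ) :
    B.size < (lab ψ σ).size := by
  have := size_le_of_mem_sub h.1
  rw [size_boxn] at this
  omega

theorem length_add_size_lab_le (hσ : Valid m ψ σ) : σ.length + (lab ψ σ).size ≤ ψ.size := by
  induction σ with
  | nil => simp [lab]
  | cons e σ ih =>
    have := Missing.size_lt hσ.2.2.2.2.2.choose_spec
    have := ih hσ.1
    simp only [lab, List.length_cons] at *
    omega

theorem mem_product_of_valid (hσ : Valid m ψ σ) : ∀ e ∈ σ, e ∈ ψ.sub ×ˢ Finset.range m := by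
  induction σ with
  | nil => simp
  | cons e σ ih =>
    intro e' he'
    rcases List.mem_cons.mp he' with rfl | he'
    · exact Finset.mem_product.mpr ⟨hσ.2.2.2.1, Finset.mem_range.mpr hσ.2.2.1⟩
    · exact ih hσ.1 e' he'

theorem cyclePos_congr {B : Formula} {p q : ℕ} (h : p % m = q % m) :
    cyclePos m σ B p = cyclePos m σ B q := by
  simp only [cyclePos, h]

@[simp] theorem cyclePos_zero {B : Formula} : cyclePos m σ B 0 = σ := by
  simp [cyclePos]

theorem cyclePos_inj {σ' : Trace} {B : Formula} {ℓ ℓ' i i' : ℕ} (hσ : Missing m ψ σ B ℓ)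
    (hσ' : Missing m ψ σ' B ℓ') (h : cyclePos m σ B i = cyclePos m σ' B i') :
    σ = σ' ∧ i % m = i' % m := by
  have head : ∀ {τ τ' : Trace} {k j}, Missing m ψ τ B k → τ ≠ (B, j) :: τ' := by
    rintro τ τ' k j hτ rfl
    exact absurd hτ.size_lt (by simp [lab])
  unfold cyclePos at h
  split_ifs at h with h1 h2 h2
  · exact ⟨h, by omega⟩
  · exact absurd h (head hσ)
  · exact absurd h.symm (head hσ')
  · simp only [List.cons.injEq, Prod.mk.injEq] at h
    exact ⟨h.2, h.1.2⟩

theorem valid_cyclePos (hσ : Valid m ψ σ) (hm : 0 < m) {B : Formula} {ℓ : ℕ} (hB : B ∈ ψ.sub)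
    (hnB : ¬ Prov m 0 true B) (hmiss : Missing m ψ σ B ℓ) (p : ℕ) :
    Valid m ψ (cyclePos m σ B p) := by
  unfold cyclePos
  split_ifs with h
  · exact hσ
  · exact ⟨hσ, Nat.pos_of_ne_zero h, Nat.mod_lt _ hm, hB, hnB, ℓ, hmiss⟩

end Trace

open Trace

/-- The edge leaving position `i` of the cycle of `B = χ.core` through `σ` carries `χ = □ᵈ B` when
`□^(d + i + t m + 1) B` is missing at `σ`: then the path from `σ` labelled `□ˡ B, …, B` runs along
the cycle, ending at a world where `B` is false. -/
def traceRel (m : ℕ) (ψ χ : Formula) (a b : Trace) : Prop :=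
  ∃ σ i, i < m ∧ a = cyclePos m σ χ.core i ∧ b = cyclePos m σ χ.core (i + 1) ∧
    ∃ t, Missing m ψ σ χ.core (χ.degree + i + t * m)

def TraceWorld (m : ℕ) (ψ : Formula) : Type := {σ : Trace // Valid m ψ σ}

instance (m : ℕ) (ψ : Formula) : Finite (TraceWorld m ψ) := by
  refine Set.Finite.to_subtype <| ((List.finite_length_le (ψ.sub ×ˢ Finset.range m) ψ.size).image
    (List.map Subtype.val)).subset fun σ hσ => ?_
  have hmem := mem_product_of_valid hσ
  have hlen := length_add_size_lab_le hσ
  lift σ to List (ψ.sub ×ˢ Finset.range m) using hmem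
  exact ⟨σ, by simp at hlen ⊢; omega, rfl⟩

def traceFrame (m : ℕ) (ψ : Formula) : NFrame (TraceWorld m ψ) :=
  fun χ a b => traceRel m ψ χ a.1 b.1

section TraceModel

variable {m : ℕ} {ψ : Formula}

theorem traceFrame_fpath_cyclePos {φ : Formula} {k : ℕ} {x y : TraceWorld m ψ}
    (hp : FPath (traceFrame m ψ) φ k x y) {σ : Trace} {i ℓ : ℕ}
    (hmiss : Missing m ψ σ φ.core ℓ) (hx : x.1 = cyclePos m σ φ.core i) :
    y.1 = cyclePos m σ φ.core (i + k) := by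
  induction k generalizing x i with
  | zero => exact hp ▸ hx
  | succ k ih =>
    obtain ⟨w, ⟨σ', i', -, hx', hw, t, hmiss'⟩, hp⟩ := hp
    rw [core_boxn] at hx' hw hmiss'
    obtain ⟨rfl, hmod⟩ := cyclePos_inj hmiss hmiss' (hx.symm.trans hx')
    have := ih hp (hw.trans (cyclePos_congr (Nat.ModEq.add_right 1 hmod.symm)))
    rwa [Nat.add_right_comm, Nat.add_assoc] at this

theorem traceFrame_accessible (hm : 0 < m) : Accessible (traceFrame m ψ) m 0 := by
  intro φ x y hp
  obtain ⟨m, rfl⟩ : ∃ m', m = m' + 1 := ⟨m - 1, by omega⟩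
  obtain ⟨_, ⟨σ, i, -, hx, -, t, hmiss⟩, -⟩ := id hp
  rw [core_boxn] at hx hmiss
  have hy := traceFrame_fpath_cyclePos hp hmiss hx
  exact Subtype.ext (hx.trans (hy.trans (cyclePos_congr (Nat.add_mod_right i _))).symm)

theorem traceRel_cyclePos (hm : 0 < m) {σ : Trace} {χ : Formula} {j k : ℕ}
    (hmiss : Missing m ψ σ χ.core k) (hjk : j ≤ k) :
    traceRel m ψ (boxn j χ.core) (cyclePos m σ χ.core (k - j))
      (cyclePos m σ χ.core (k + 1 - j)) := by
  refine ⟨σ, (k - j) % m, Nat.mod_lt _ hm, ?_, ?_, (k - j) / m, ?_⟩ <;>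
    simp only [core_boxn, core_core, degree_boxn, degree_core]
  · exact cyclePos_congr (Nat.mod_mod _ _).symm
  · rw [Nat.sub_add_comm hjk]
    exact cyclePos_congr (Nat.ModEq.add_right 1 (Nat.mod_modEq _ m).symm)
  · rwa [show j + 0 + (k - j) % m + (k - j) / m * m = k by
      have := Nat.mod_add_div' (k - j) m; omega]

theorem not_traceRel_of_box_mem (hψ : ¬ Prov m 0 true ψ) {α : Formula} {a : TraceWorld m ψ}
    {b : Trace} (hl : .box α ∈ (lab ψ a.1).sub) (hmem : .box α ∈ mcs m ψ a.1) :
    ¬ traceRel m ψ α a.1 b := by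
  intro hR
  obtain ⟨σ, i, hi, ha, -, t, hmiss⟩ := hR
  by_cases h0 : i % m = 0
  · obtain rfl : i = 0 := by rwa [Nat.mod_eq_of_lt hi] at h0
    rw [cyclePos_zero] at ha
    rw [ha, box_eq_boxn_core] at hmem
    have hσ : Valid m ψ σ := ha ▸ a.2
    refine hmiss.2 ((isMCS_mcs hψ hσ).1.mem_of_imp (Prov.boxn_imp_boxn_of_modEq (by omega) ?_)
      hmem (sub_subset_sub (lab_mem_sub hσ) hmiss.1))
    simp only [Nat.ModEq, Nat.add_zero, Nat.add_right_comm _ (t * m), Nat.add_mul_mod_self_right]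
  · rw [cyclePos, if_neg h0] at ha
    rw [ha] at hl
    have := size_le_of_mem_sub hl
    have := size_eq_degree_add_size_core α
    simp only [lab, size] at *
    omega

theorem cyclePos_succ_refutes (hψ : ¬ Prov m 0 true ψ) (hm : 0 < m) {σ : Trace}
    (hσ : Valid m ψ σ) {B : Formula} {k : ℕ} (hB : B ∈ ψ.sub) (hnB : ¬ Prov m 0 true B)
    (hmiss : Missing m ψ σ B k) :
    B ∈ (lab ψ (cyclePos m σ B (k + 1))).sub ∧ B ∉ mcs m ψ (cyclePos m σ B (k + 1)) := by
  have hval := valid_cyclePos hσ hm hB hnB hmiss (k + 1)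
  unfold cyclePos at hval ⊢
  split_ifs with h
  · refine ⟨boxn_mem_sub_of_le (Nat.zero_le _) hmiss.1, fun hB' => hmiss.2 ?_⟩
    exact (isMCS_mcs hψ hσ).1.mem_of_imp (Prov.boxn_imp_boxn_of_modEq (j := 0) (Nat.zero_le _)
      ((Nat.zero_mod m).trans h.symm)) hB' (sub_subset_sub (lab_mem_sub hσ) hmiss.1)
  · rw [if_neg h] at hval
    exact ⟨mem_sub_self B, fun hB' => (isMCS_mcs hψ hval).1.negg_not_mem hB' (isMCS_mcs hψ hval).2⟩

theorem traceFrame_exists_refuting (hψ : ¬ Prov m 0 true ψ) (hm : 0 < m) {α : Formula}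
    {w : TraceWorld m ψ} (hl : .box α ∈ (lab ψ w.1).sub) (hn : .box α ∉ mcs m ψ w.1)
    (ih : ∀ χ w', χ.size ≤ α.size → χ ∈ (lab ψ w'.1).sub →
      (Sat (NModel.ofMCS (traceFrame m ψ) fun w => mcs m ψ w.1) w' χ ↔ χ ∈ mcs m ψ w'.1)) :
    ∃ w', traceFrame m ψ α w w' ∧
      ¬ Sat (NModel.ofMCS (traceFrame m ψ) fun w => mcs m ψ w.1) w' α := by
  rw [box_eq_boxn_core] at hl hn
  have hmiss : Missing m ψ w.1 α.core α.degree := ⟨hl, hn⟩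
  have hlψ := sub_subset_sub (lab_mem_sub w.2)
  have hB : α.core ∈ ψ.sub := hlψ (boxn_mem_sub_of_le (Nat.zero_le _) hl)
  have hnB : ¬ Prov m 0 true α.core := fun hp =>
    hn ((isMCS_mcs hψ w.2).1.mem_of_prov (Prov.boxn_of_le (Nat.zero_le _) hp) (hlψ hl))
  let c : ℕ → TraceWorld m ψ := fun p =>
    ⟨cyclePos m w.1 α.core p, valid_cyclePos w.2 hm hB hnB hmiss p⟩
  have hpath : FPath (traceFrame m ψ) α.core (α.degree + 1) w (c (α.degree + 1)) := by
    refine FPath.of_stages (fun j x => x = c (α.degree + 1 - j)) (fun _ h => h)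
      (fun j _ => ⟨_, rfl⟩) (fun j hj a b ha hb => ?_) w (Subtype.ext (by simp [c]))
    subst ha hb
    have := traceRel_cyclePos hm hmiss (j := j) (by omega)
    rwa [← Nat.add_sub_add_right α.degree 1 j] at this
  have hend := cyclePos_succ_refutes hψ hm w.2 hB hnB hmiss
  have hns :
      ¬ Sat (NModel.ofMCS (traceFrame m ψ) fun w => mcs m ψ w.1) (c (α.degree + 1)) α.core := by
    rw [ih _ _ (by rw [size_eq_degree_add_size_core α]; omega) hend.1]
    exact hend.2
  obtain ⟨w', hR, hp⟩ := hpath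
  rw [boxn_degree_core] at hR
  exact ⟨w', hR, boxn_degree_core α ▸ not_sat_boxn_of_fpath hp hns⟩

noncomputable def traceModel (hψ : ¬ Prov m 0 true ψ) (hm : 0 < m) :
    LabelledModel m 0 ψ (TraceWorld m ψ) where
  rel := traceFrame m ψ
  mcs w := mcs m ψ w.1
  label w := (lab ψ w.1).sub
  isMCS w := (isMCS_mcs hψ w.2).1
  label_subset w := sub_subset_sub (lab_mem_sub w.2)
  sub_subset_label _ _ h := sub_subset_sub h
  box_mem _ _ _ hl hmem hR := (not_traceRel_of_box_mem hψ hl hmem hR).elim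
  exists_refuting _ _ hl hn ih := traceFrame_exists_refuting hψ hm hl hn ih

end TraceModel

def FinitelyValid (m n : ℕ) (ψ : Formula) : Prop :=
  ∀ (W : Type) [Fintype W] [Nonempty W] (R : NFrame W), SubAcc R m n ψ.sub → ValidF R ψ

theorem LabelledModel.not_finitelyValid {m n : ℕ} {ψ : Formula} {W : Type} [Finite W]
    (G : LabelledModel m n ψ W) (hacc : SubAcc G.rel m n ψ.sub) {w : W} (hψ : ψ ∈ G.label w)
    (hneg : ψ.negg ∈ G.mcs w) : ¬ FinitelyValid m n ψ := fun h =>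
  G.not_validF hψ hneg (@h W (Fintype.ofFinite W) ⟨w⟩ G.rel hacc)

theorem not_finitelyValid_canonical {m n : ℕ} {ψ : Formula} (hψ : ¬ Prov m n true ψ)
    (hacc : SubAcc (canonicalRel m n ψ) m n ψ.sub) : ¬ FinitelyValid m n ψ := by
  obtain ⟨X, hX, hneg⟩ := exists_isMCS_negg_mem (mem_sub_self ψ) hψ
  exact (canonicalModel m n ψ).not_finitelyValid hacc (w := ⟨X, hX⟩) (mem_sub_self ψ) hneg

theorem not_finitelyValid_trace {m : ℕ} {ψ : Formula} (hψ : ¬ Prov m 0 true ψ) (hm : 0 < m) :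
    ¬ FinitelyValid m 0 ψ :=
  (traceModel hψ hm).not_finitelyValid (fun φ _ => traceFrame_accessible hm φ)
    (w := ⟨[], trivial⟩) (mem_sub_self ψ) (isMCS_mcs (σ := []) hψ trivial).2

theorem stmt14 (m n : ℕ) (ψ : Formula)
    (h : ∀ (W : Type) [Fintype W] [Nonempty W] (R : NFrame W),
      SubAcc R m n ψ.sub → ValidF R ψ) :
    Prov m n true ψ := by
  by_contra hψ
  rcases Nat.eq_zero_or_pos n with rfl | hn
  · rcases Nat.eq_zero_or_pos m with rfl | hm
    · exact not_finitelyValid_canonical hψ (fun _ _ _ _ hp => hp) h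
    · exact not_finitelyValid_trace hψ hm h
  · exact not_finitelyValid_canonical hψ (canonicalRel_subAcc hn) h
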